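/- arXiv:2511.14804 — 4 statements merged into one kernel-verified Lean document; each statement's English description precedes it below -/
import Mathlib

section
/- For the unit square S = [0,1] × [0,1] ⊆ ℝ² (with the Euclidean metric), the 2-dimensional Hausdorff measure satisfies H²(S) ≥ 4/π. -/
/-!
Every planar set of diameter `d` has area at most `π d² / 4` (the isodiametric inequality), so
`(4 / π) • volume ≤ μH[2]` on `ℝ²`, and the unit square has area `1`.

The isodiametric inequality is proved by Steiner symmetrization: replacing every vertical section
of a compact set by a centred interval of the same length preserves area and does not increase
diameter. Symmetrizing vertically and then horizontally (taking closures in between) produces a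
centrally symmetric set of no smaller area and no larger diameter `d`, and such a set lies in the
closed disc of radius `d / 2`.
-/

open MeasureTheory ENNReal Set Real

def PlaneDiamLE (A : Set (ℝ × ℝ)) (d : ℝ) : Prop :=
  ∀ p ∈ A, ∀ q ∈ A, (p.1 - q.1) ^ 2 + (p.2 - q.2) ^ 2 ≤ d ^ 2

/-- The strict inequality makes null sections symmetrize to the empty set. -/
def steinerSymm (A : Set (ℝ × ℝ)) : Set (ℝ × ℝ) :=
  {p | ENNReal.ofReal (2 * |p.2|) < volume (Prod.mk p.1 ⁻¹' A)}

theorem Real.volume_setOf_ofReal_two_mul_abs_lt (m : ℝ≥0∞) :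
    volume {t : ℝ | ENNReal.ofReal (2 * |t|) < m} = m := by
  rcases eq_or_ne m ⊤ with rfl | hm
  · simp only [ofReal_lt_top, ofPred_true, Real.volume_univ]
  · have : {t : ℝ | ENNReal.ofReal (2 * |t|) < m} = Ioo (-(m.toReal / 2)) (m.toReal / 2) := by
      ext t
      rw [mem_ofPred_eq, ENNReal.ofReal_lt_iff_lt_toReal (by positivity) hm, mem_Ioo, ← abs_lt]
      constructor <;> intro h <;> linarith
    rw [this, Real.volume_Ioo, sub_neg_eq_add, add_halves, ofReal_toReal hm]

theorem measurableSet_steinerSymm {A : Set (ℝ × ℝ)} (hA : MeasurableSet A) :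
    MeasurableSet (steinerSymm A) :=
  measurableSet_lt (by fun_prop) ((measurable_measure_prodMk_left hA).comp measurable_fst)

theorem volume_steinerSymm {A : Set (ℝ × ℝ)} (hA : MeasurableSet A) :
    volume (steinerSymm A) = volume A := by
  rw [Measure.volume_eq_prod, Measure.prod_apply (measurableSet_steinerSymm hA),
    Measure.prod_apply hA]
  exact lintegral_congr fun x =>
    Real.volume_setOf_ofReal_two_mul_abs_lt (volume (Prod.mk x ⁻¹' A))

theorem mapsTo_steinerSymm_neg_snd (A : Set (ℝ × ℝ)) :
    MapsTo (Prod.map id Neg.neg) (steinerSymm A) (steinerSymm A) := fun p hp => by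
  simpa [steinerSymm] using hp

theorem mapsTo_steinerSymm_neg_fst {A : Set (ℝ × ℝ)} (hA : MapsTo (Prod.map Neg.neg id) A A) :
    MapsTo (Prod.map Neg.neg id) (steinerSymm A) (steinerSymm A) := fun p hp => by
  have hsec : Prod.mk (-p.1) ⁻¹' A = Prod.mk p.1 ⁻¹' A :=
    Subset.antisymm (fun t ht => by simpa using hA ht) (fun t ht => hA ht)
  simpa [steinerSymm, hsec] using hp

theorem Bornology.IsBounded.volume_le_sSup_sub_sInf {C : Set ℝ} (hC : IsBounded C) :
    volume C ≤ ENNReal.ofReal (sSup C - sInf C) :=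
  (measure_mono hC.subset_Icc_sInf_sSup).trans_eq (Real.volume_Icc ..)

theorem exists_abs_sub_le_abs_sub {C C' : Set ℝ} (hC : IsCompact C) (hC' : IsCompact C')
    {s s' : ℝ} (hs : ENNReal.ofReal (2 * |s|) < volume C)
    (hs' : ENNReal.ofReal (2 * |s'|) < volume C') :
    ∃ u ∈ C, ∃ u' ∈ C', |s - s'| ≤ |u - u'| := by
  have hne : C.Nonempty := nonempty_of_measure_ne_zero (ne_bot_of_gt hs)
  have hne' : C'.Nonempty := nonempty_of_measure_ne_zero (ne_bot_of_gt hs')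
  have hlen : 2 * |s| < sSup C - sInf C :=
    (ofReal_lt_ofReal_iff'.1 (hs.trans_le hC.isBounded.volume_le_sSup_sub_sInf)).1
  have hlen' : 2 * |s'| < sSup C' - sInf C' :=
    (ofReal_lt_ofReal_iff'.1 (hs'.trans_le hC'.isBounded.volume_le_sSup_sub_sInf)).1
  have hss : |s - s'| ≤ |s| + |s'| := abs_sub _ _
  -- The two cross distances between extreme points add up to the sum of the two lengths.
  rcases le_total (sSup C - sInf C') (sSup C' - sInf C) with h | h
  · refine ⟨sInf C, hC.sInf_mem hne, sSup C', hC'.sSup_mem hne', ?_⟩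
    rw [abs_sub_comm (sInf C)]
    exact hss.trans ((by linarith : |s| + |s'| ≤ sSup C' - sInf C).trans (le_abs_self _))
  · refine ⟨sSup C, hC.sSup_mem hne, sInf C', hC'.sInf_mem hne', ?_⟩
    exact hss.trans ((by linarith : |s| + |s'| ≤ sSup C - sInf C').trans (le_abs_self _))

namespace PlaneDiamLE

variable {A : Set (ℝ × ℝ)} {d : ℝ}

theorem steinerSymm (hA : IsCompact A) (h : PlaneDiamLE A d) : PlaneDiamLE (steinerSymm A) d := by
  intro p hp q hq
  have hsec (x : ℝ) : IsCompact (Prod.mk x ⁻¹' A) :=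
    (isInducing_prodMkRight x).isCompact_preimage (isClosedMap_prodMk_left x).isClosed_range hA
  obtain ⟨u, hu, u', hu', hle⟩ := exists_abs_sub_le_abs_sub (hsec p.1) (hsec q.1) hp hq
  have hends := h _ hu _ hu'
  have hsnd : (p.2 - q.2) ^ 2 ≤ (u - u') ^ 2 := sq_le_sq.2 (by simpa using hle)
  dsimp only at hends
  linarith

theorem closure (h : PlaneDiamLE A d) : PlaneDiamLE (closure A) d := by
  have hclosed : IsClosed {pq : (ℝ × ℝ) × (ℝ × ℝ) |
      (pq.1.1 - pq.2.1) ^ 2 + (pq.1.2 - pq.2.2) ^ 2 ≤ d ^ 2} :=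
    isClosed_le (by fun_prop) continuous_const
  have hsub := closure_minimal (s := A ×ˢ A) (fun pq hpq => h pq.1 hpq.1 pq.2 hpq.2) hclosed
  rw [closure_prod_eq] at hsub
  exact fun p hp q hq => hsub (mk_mem_prod hp hq)

theorem isBounded (h : PlaneDiamLE A d) : Bornology.IsBounded A := by
  rcases A.eq_empty_or_nonempty with rfl | ⟨p₀, hp₀⟩
  · exact Bornology.isBounded_empty
  refine Metric.isBounded_closedBall (x := p₀) (r := |d|) |>.subset fun q hq => ?_
  have := h q hq p₀ hp₀
  rw [Metric.mem_closedBall, Prod.dist_eq, Real.dist_eq, Real.dist_eq]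
  exact max_le (sq_le_sq.1 (by nlinarith)) (sq_le_sq.1 (by nlinarith))

theorem image_swap (h : PlaneDiamLE A d) : PlaneDiamLE (Prod.swap '' A) d := by
  rintro _ ⟨p, hp, rfl⟩ _ ⟨q, hq, rfl⟩
  simpa only [Prod.fst_swap, Prod.snd_swap, add_comm] using h p hp q hq

theorem subset_disk (h : PlaneDiamLE A d) (hsymm : ∀ p ∈ A, -p ∈ A) :
    A ⊆ {p | p.1 ^ 2 + p.2 ^ 2 ≤ (d / 2) ^ 2} := by
  intro p hp
  have := h p hp (-p) (hsymm p hp)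
  simp only [Prod.fst_neg, Prod.snd_neg, sub_neg_eq_add] at this
  rw [mem_ofPred_eq]
  nlinarith

end PlaneDiamLE

theorem Real.volume_image_swap (A : Set (ℝ × ℝ)) : volume (Prod.swap '' A) = volume A := by
  rw [image_swap_eq_preimage_swap, Measure.volume_eq_prod]
  exact Measure.measurePreserving_swap.measure_preimage_equiv (f := MeasurableEquiv.prodComm) A

def euclideanToProd : EuclideanSpace ℝ (Fin 2) ≃ᵐ ℝ × ℝ :=
  (MeasurableEquiv.toLp 2 (Fin 2 → ℝ)).symm.trans MeasurableEquiv.finTwoArrow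

theorem measurePreserving_euclideanToProd :
    MeasurePreserving euclideanToProd volume volume :=
  (volume_preserving_finTwoArrow ℝ).comp
    (EuclideanSpace.volume_preserving_symm_measurableEquiv_toLp (Fin 2))

theorem dist_euclideanToProd_symm_sq (p q : ℝ × ℝ) :
    dist (euclideanToProd.symm p) (euclideanToProd.symm q) ^ 2 =
      (p.1 - q.1) ^ 2 + (p.2 - q.2) ^ 2 := by
  rw [EuclideanSpace.dist_eq, Real.sq_sqrt (by positivity)]
  simp [Fin.sum_univ_two, Real.dist_eq, sq_abs, euclideanToProd]

theorem Real.volume_disk (r : ℝ) :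
    volume {p : ℝ × ℝ | p.1 ^ 2 + p.2 ^ 2 ≤ r ^ 2} = ENNReal.ofReal (π * r ^ 2) := by
  have : {p : ℝ × ℝ | p.1 ^ 2 + p.2 ^ 2 ≤ r ^ 2} =
      euclideanToProd.symm ⁻¹' Metric.closedBall (euclideanToProd.symm 0) |r| := by
    ext p
    rw [mem_preimage, Metric.mem_closedBall, ← abs_dist, ← sq_le_sq,
      dist_euclideanToProd_symm_sq]
    simp
  rw [this, measurePreserving_euclideanToProd.symm.measure_preimage_equiv,
    EuclideanSpace.volume_closedBall_fin_two, ← ofReal_pow (abs_nonneg r), sq_abs,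
    ← ofReal_mul (by positivity), mul_comm]

theorem volume_le_of_planeDiamLE {A : Set (ℝ × ℝ)} {d : ℝ} (h : PlaneDiamLE A d) :
    volume A ≤ ENNReal.ofReal (π / 4 * d ^ 2) := by
  have hK : IsCompact (closure A) := h.isBounded.isCompact_closure
  set C := steinerSymm (closure A)
  have hC : PlaneDiamLE C d := h.closure.steinerSymm hK
  set D := Prod.swap '' closure C
  have hD : IsCompact D := hC.isBounded.isCompact_closure.image continuous_swap
  have hD_symm : MapsTo (Prod.map Neg.neg id) D D := by
    rintro _ ⟨p, hp, rfl⟩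
    exact ⟨Prod.map id Neg.neg p,
      map_mem_closure (by fun_prop) hp (mapsTo_steinerSymm_neg_snd _), rfl⟩
  set E := steinerSymm D
  have hE_symm : ∀ p ∈ E, -p ∈ E := fun p hp =>
    mapsTo_steinerSymm_neg_fst hD_symm (mapsTo_steinerSymm_neg_snd D hp)
  calc volume A ≤ volume (closure A) := measure_mono subset_closure
    _ = volume C := (volume_steinerSymm hK.isClosed.measurableSet).symm
    _ ≤ volume (closure C) := measure_mono subset_closure
    _ = volume D := (Real.volume_image_swap _).symm
    _ = volume E := (volume_steinerSymm hD.isClosed.measurableSet).symm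
    _ ≤ volume {p : ℝ × ℝ | p.1 ^ 2 + p.2 ^ 2 ≤ (d / 2) ^ 2} :=
      measure_mono ((hC.closure.image_swap.steinerSymm hD).subset_disk hE_symm)
    _ = ENNReal.ofReal (π / 4 * d ^ 2) := by rw [Real.volume_disk]; ring_nf

open Metric in
theorem EuclideanSpace.volume_le_ediam_sq (s : Set (EuclideanSpace ℝ (Fin 2))) :
    volume s ≤ ENNReal.ofReal (π / 4) * ediam s ^ 2 := by
  rcases eq_or_ne (ediam s) ⊤ with h | h
  · simp [h, pi_pos]
  have hA : PlaneDiamLE (euclideanToProd.symm ⁻¹' s) (diam s) := fun p hp q hq => by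
    rw [← dist_euclideanToProd_symm_sq]
    exact pow_le_pow_left₀ dist_nonneg (dist_le_diam_of_mem' h hp hq) 2
  calc volume s = volume (euclideanToProd.symm ⁻¹' s) :=
        (measurePreserving_euclideanToProd.symm.measure_preimage_equiv s).symm
    _ ≤ ENNReal.ofReal (π / 4 * diam s ^ 2) := volume_le_of_planeDiamLE hA
    _ = ENNReal.ofReal (π / 4) * ediam s ^ 2 := by
      rw [ofReal_mul (by positivity), ofReal_pow diam_nonneg, diam, ofReal_toReal h]

theorem EuclideanSpace.volume_setOf_forall_mem_Icc_zero_one (ι : Type*) [Fintype ι] :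
    volume {x : EuclideanSpace ℝ ι | ∀ i, x i ∈ Icc (0 : ℝ) 1} = 1 := by
  have : {x : EuclideanSpace ℝ ι | ∀ i, x i ∈ Icc (0 : ℝ) 1} =
      (MeasurableEquiv.toLp 2 (ι → ℝ)).symm ⁻¹' univ.pi fun _ => Icc 0 1 := by
    ext x
    simp only [mem_preimage, mem_univ_pi]
    rfl
  rw [this, (EuclideanSpace.volume_preserving_symm_measurableEquiv_toLp ι).measure_preimage_equiv,
    volume_pi_pi]
  simp

theorem EuclideanSpace.smul_volume_le_hausdorffMeasure_two :
    ENNReal.ofReal (4 / π) • (volume : Measure (EuclideanSpace ℝ (Fin 2))) ≤ μH[2] := by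
  refine Measure.le_hausdorffMeasure 2 _ 1 one_pos fun t _ => ?_
  calc ENNReal.ofReal (4 / π) * volume t
      ≤ ENNReal.ofReal (4 / π) * (ENNReal.ofReal (π / 4) * Metric.ediam t ^ 2) := by
        gcongr
        exact volume_le_ediam_sq t
    _ = Metric.ediam t ^ (2 : ℝ) := by
      rw [← mul_assoc, ← ofReal_mul (by positivity), div_mul_div_cancel₀ (by positivity),
        div_self four_ne_zero, ofReal_one, one_mul, ENNReal.rpow_two]

/-- The 2-dimensional Hausdorff measure of the unit square `[0,1] × [0,1] ⊆ ℝ²`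
(with the Euclidean metric) is at least `4/π`. -/
theorem hausdorff_measure_unit_square_ge :
    ENNReal.ofReal (4 / Real.pi) ≤
      μH[(2 : ℝ)] {x : EuclideanSpace ℝ (Fin 2) | ∀ i, x i ∈ Set.Icc (0 : ℝ) 1} := by
  calc ENNReal.ofReal (4 / Real.pi)
      = (ENNReal.ofReal (4 / π) • volume) {x : EuclideanSpace ℝ (Fin 2) | ∀ i, x i ∈ Icc 0 1} := by
        rw [Measure.smul_apply, EuclideanSpace.volume_setOf_forall_mem_Icc_zero_one, smul_eq_mul,
          mul_one]
    _ ≤ _ := EuclideanSpace.smul_volume_le_hausdorffMeasure_two _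
end

section
/- Let s = log 2 / log 3. Then the s-dimensional Hausdorff measure of the middle-thirds Cantor set C satisfies H^s(C) ≥ 1/4 > 0; in particular dimH(C) ≥ log 2 / log 3. -/
/-!
Mass distribution principle. Writing `y ∈ [0, 1)` in binary and replacing every digit `1` by `2`
gives a ternary expansion with digits in `{0, 2}`, i.e. a point of the Cantor set; the image of
Lebesgue measure on `[0, 1)` is a probability measure on the Cantor set. Two such ternary
expansions that first differ at digit `k` are at distance at least `3⁻¹ ^ (k + 1)`, so a set of
diameter `< 3⁻¹ ^ n` pulls back into a single dyadic interval of length `2⁻¹ ^ n = (3⁻¹ ^ n) ^ s`.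
Comparing an arbitrary small set with the nearest scale `3⁻¹ ^ n` costs the factor
`(3⁻¹ ^ 2) ^ s = 1 / 4`.
-/

open MeasureTheory Set Metric Filter Topology
open scoped ENNReal

namespace Real

theorem inv_three_pow_le_abs_ofDigits_sub {a b : ℕ → Fin 3} (ha : ∀ i, a i ≠ 1)
    (hb : ∀ i, b i ≠ 1) {k : ℕ} (hagree : ∀ i < k, a i = b i) (hk : a k ≠ b k) :
    ((3 : ℝ) ^ (k + 1))⁻¹ ≤ |ofDigits a - ofDigits b| := by
  wlog hab : a k = 0 ∧ b k = 2 generalizing a b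
  · rw [abs_sub_comm]
    exact this hb ha (fun i hi ↦ (hagree i hi).symm) hk.symm (by grind)
  have hsum : ∑ i ∈ Finset.range k, ofDigitsTerm a i = ∑ i ∈ Finset.range k, ofDigitsTerm b i :=
    Finset.sum_congr rfl fun i hi ↦ by rw [ofDigitsTerm, hagree i (Finset.mem_range.mp hi)]; rfl
  rw [ofDigits_eq_sum_add_ofDigits a (k + 1), ofDigits_eq_sum_add_ofDigits b (k + 1),
    Finset.sum_range_succ, Finset.sum_range_succ, hsum]
  simp only [ofDigitsTerm, hab.1, hab.2, Fin.val_zero, Fin.val_two, Nat.cast_zero, Nat.cast_ofNat]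
  have htail_a := ofDigits_le_one fun i ↦ a (i + (k + 1))
  have htail_b := ofDigits_nonneg fun i ↦ b (i + (k + 1))
  have hpos : (0 : ℝ) < ((3 : ℝ) ^ (k + 1))⁻¹ := by positivity
  rw [abs_sub_comm, abs_of_nonneg] <;> nlinarith

theorem eq_of_abs_ofDigits_sub_lt {a b : ℕ → Fin 3} (ha : ∀ i, a i ≠ 1) (hb : ∀ i, b i ≠ 1)
    {n : ℕ} (h : |ofDigits a - ofDigits b| < ((3 : ℝ) ^ n)⁻¹) : ∀ i < n, a i = b i := by
  by_contra! hne
  have hex : ∃ i, a i ≠ b i := hne.imp fun _ ↦ And.right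
  have hk : Nat.find hex < n := (Nat.find_min' hex hne.choose_spec.2).trans_lt hne.choose_spec.1
  have hfirst := inv_three_pow_le_abs_ofDigits_sub ha hb
    (fun i hi ↦ not_not.mp (Nat.find_min hex hi)) (Nat.find_spec hex)
  have hscale : ((3 : ℝ) ^ n)⁻¹ ≤ ((3 : ℝ) ^ (Nat.find hex + 1))⁻¹ :=
    inv_anti₀ (by positivity) (pow_le_pow_right₀ (by norm_num) hk)
  linarith

theorem volume_setOf_digits_eq_le (b : ℕ) [NeZero b] (a : ℕ → Fin b) (n : ℕ) :
    volume {y ∈ Ico (0 : ℝ) 1 | ∀ i < n, digits y b i = a i} ≤ ENNReal.ofReal ((b : ℝ)⁻¹ ^ n) := by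
  set S := ∑ i ∈ Finset.range n, ofDigitsTerm a i
  have hsub : {y ∈ Ico (0 : ℝ) 1 | ∀ i < n, digits y b i = a i} ⊆ Icc S (S + (b : ℝ)⁻¹ ^ n) := by
    rintro y ⟨hy, hdig⟩
    have hS : ∑ i ∈ Finset.range n, ofDigitsTerm (digits y b) i = S :=
      Finset.sum_congr rfl fun i hi ↦ by rw [ofDigitsTerm, hdig i (Finset.mem_range.mp hi)]; rfl
    have hlower := le_sum_ofDigitsTerm_digits (b := b) hy n
    have hupper := sum_ofDigitsTerm_digits_le (b := b) hy n
    constructor <;> linarith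
  calc _ ≤ volume (Icc S (S + (b : ℝ)⁻¹ ^ n)) := measure_mono hsub
    _ = _ := by rw [volume_Icc, add_sub_cancel_left]

theorem measurable_digits (b : ℕ) [NeZero b] : Measurable fun y : ℝ ↦ digits y b :=
  measurable_pi_lambda _ fun _ ↦ measurable_from_top.comp
    (Nat.measurable_floor.comp (measurable_id.mul_const _))

end Real

namespace MeasureTheory.Measure

theorem measure_eq_zero_of_ediam_eq_zero_of_ediam_lt_pow {X : Type*} [PseudoEMetricSpace X]
    [MeasurableSpace X] {μ : Measure X} {θ d : ℝ} (hθ₀ : 0 < θ) (hθ₁ : θ < 1) (hd : 0 < d)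
    (h : ∀ (n : ℕ) (s : Set X), ediam s < ENNReal.ofReal (θ ^ n) →
      μ s ≤ ENNReal.ofReal ((θ ^ n) ^ d)) {s : Set X} (hs : ediam s = 0) : μ s = 0 := by
  have hlim : Tendsto (fun n : ℕ ↦ ENNReal.ofReal ((θ ^ n) ^ d)) atTop (𝓝 0) := by
    simp_rw [← Real.rpow_natCast, ← Real.rpow_mul hθ₀.le, mul_comm _ d, Real.rpow_mul hθ₀.le,
      Real.rpow_natCast]
    simpa using ENNReal.tendsto_ofReal (tendsto_pow_atTop_nhds_zero_of_lt_one
      (by positivity) (Real.rpow_lt_one hθ₀.le hθ₁ hd))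
  exact le_antisymm (ge_of_tendsto' hlim fun n ↦ h n s (by rw [hs]; positivity)) zero_le

theorem smul_le_hausdorffMeasure_of_ediam_lt_pow {X : Type*} [EMetricSpace X] [MeasurableSpace X]
    [BorelSpace X] (μ : Measure X) {θ d : ℝ} (hθ₀ : 0 < θ) (hθ₁ : θ < 1) (hd : 0 < d)
    (h : ∀ (n : ℕ) (s : Set X), ediam s < ENNReal.ofReal (θ ^ n) →
      μ s ≤ ENNReal.ofReal ((θ ^ n) ^ d)) :
    ENNReal.ofReal ((θ ^ 2) ^ d) • μ ≤ μH[d] := by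
  refine le_hausdorffMeasure d _ (ENNReal.ofReal θ) (by simpa using hθ₀) fun s hs ↦ ?_
  rw [Measure.smul_apply, smul_eq_mul]
  rcases eq_or_ne (ediam s) 0 with h0 | h0
  · rw [measure_eq_zero_of_ediam_eq_zero_of_ediam_lt_pow hθ₀ hθ₁ hd h h0, mul_zero]
    exact zero_le
  have hfin : ediam s ≠ ∞ := ne_top_of_le_ne_top ENNReal.ofReal_ne_top hs
  set x := (ediam s).toReal
  have hx : ediam s = ENNReal.ofReal x := (ENNReal.ofReal_toReal hfin).symm
  have hx₀ : 0 < x := ENNReal.toReal_pos h0 hfin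
  have hxθ : x ≤ θ := by rwa [hx, ENNReal.ofReal_le_ofReal_iff hθ₀.le] at hs
  obtain ⟨n, hn, hxn⟩ := exists_nat_pow_near_of_lt_one (div_pos hx₀ hθ₀)
    ((div_le_one hθ₀).mpr hxθ) hθ₀ hθ₁
  have hlt : x < θ ^ n :=
    calc x ≤ θ ^ (n + 1) := by rwa [div_le_iff₀ hθ₀, ← pow_succ] at hxn
      _ < θ ^ n := pow_lt_pow_right_of_lt_one₀ hθ₀ hθ₁ n.lt_succ_self
  have hgt : θ ^ (n + 2) < x := by rwa [lt_div_iff₀ hθ₀, ← pow_succ] at hn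
  calc ENNReal.ofReal ((θ ^ 2) ^ d) * μ s
      ≤ ENNReal.ofReal ((θ ^ 2) ^ d) * ENNReal.ofReal ((θ ^ n) ^ d) := by
        gcongr
        exact h n s (by rw [hx]; exact ENNReal.ofReal_lt_ofReal_iff'.mpr ⟨hlt, by positivity⟩)
    _ = ENNReal.ofReal ((θ ^ (n + 2)) ^ d) := by
        rw [← ENNReal.ofReal_mul (by positivity), ← Real.mul_rpow (by positivity) (by positivity),
          ← pow_add, add_comm]
    _ ≤ ENNReal.ofReal (x ^ d) := by gcongr
    _ = ediam s ^ d := by rw [hx, ENNReal.ofReal_rpow_of_pos hx₀]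

end MeasureTheory.Measure

section CantorMeasure

open Real

def zeroTwoDigit : Fin 2 → Fin 3 := ![0, 2]

theorem zeroTwoDigit_injective : Function.Injective zeroTwoDigit := by decide

theorem zeroTwoDigit_ne_one (i : Fin 2) : zeroTwoDigit i ≠ 1 := by fin_cases i <;> decide

noncomputable def cantorOfBinary (y : ℝ) : ℝ := ofDigits fun i ↦ zeroTwoDigit (digits y 2 i)

theorem cantorOfBinary_mem_cantorSet (y : ℝ) : cantorOfBinary y ∈ cantorSet :=
  ofDigits_zero_two_sequence_mem_cantorSet fun _ ↦ zeroTwoDigit_ne_one _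

theorem measurable_cantorOfBinary : Measurable cantorOfBinary :=
  continuous_ofDigits.measurable.comp <| measurable_pi_lambda _ fun i ↦
    measurable_from_top.comp ((measurable_pi_apply i).comp (measurable_digits 2))

theorem digits_eq_of_abs_cantorOfBinary_sub_lt {y z : ℝ} {n : ℕ}
    (h : |cantorOfBinary y - cantorOfBinary z| < ((3 : ℝ) ^ n)⁻¹) :
    ∀ i < n, digits y 2 i = digits z 2 i := fun i hi ↦
  zeroTwoDigit_injective <| eq_of_abs_ofDigits_sub_lt (fun _ ↦ zeroTwoDigit_ne_one _)
    (fun _ ↦ zeroTwoDigit_ne_one _) h i hi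

noncomputable def cantorMeasure : Measure ℝ :=
  (volume.restrict (Ico 0 1)).map cantorOfBinary

theorem cantorMeasure_apply {s : Set ℝ} (hs : MeasurableSet s) :
    cantorMeasure s = volume (cantorOfBinary ⁻¹' s ∩ Ico 0 1) := by
  rw [cantorMeasure, Measure.map_apply measurable_cantorOfBinary hs,
    Measure.restrict_apply (measurable_cantorOfBinary hs)]

theorem cantorMeasure_cantorSet : cantorMeasure cantorSet = 1 := by
  rw [cantorMeasure_apply isClosed_cantorSet.measurableSet,
    preimage_eq_univ_iff.mpr (range_subset_iff.mpr cantorOfBinary_mem_cantorSet), univ_inter,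
    volume_Ico, sub_zero, ENNReal.ofReal_one]

theorem cantorMeasure_le_of_ediam_lt {s : Set ℝ} {n : ℕ}
    (hs : ediam s < ENNReal.ofReal ((3 : ℝ)⁻¹ ^ n)) :
    cantorMeasure s ≤ ENNReal.ofReal ((2 : ℝ)⁻¹ ^ n) := by
  -- `s` need not be measurable, so we pass to its closure, which has the same diameter.
  set t := cantorOfBinary ⁻¹' closure s ∩ Ico 0 1
  have hclosure : cantorMeasure s ≤ volume t :=
    (measure_mono subset_closure).trans (cantorMeasure_apply isClosed_closure.measurableSet).le
  obtain ht | ⟨z, hz⟩ := t.eq_empty_or_nonempty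
  · rw [ht, measure_empty] at hclosure
    exact hclosure.trans zero_le
  have hsub : t ⊆ {y ∈ Ico (0 : ℝ) 1 | ∀ i < n, digits y 2 i = digits z 2 i} := by
    refine fun y hy ↦ ⟨hy.2, digits_eq_of_abs_cantorOfBinary_sub_lt ?_⟩
    rw [← Real.dist_eq, ← inv_pow, ← edist_lt_ofReal]
    calc edist _ _ ≤ ediam (closure s) := edist_le_ediam_of_mem hy.1 hz.1
      _ = ediam s := ediam_closure s
      _ < _ := hs
  calc cantorMeasure s ≤ volume t := hclosure
    _ ≤ _ := (measure_mono hsub).trans (by simpa using volume_setOf_digits_eq_le 2 _ n)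

end CantorMeasure

theorem inv_three_pow_rpow_log_two_div_log_three (n : ℕ) :
    ((3 : ℝ)⁻¹ ^ n) ^ (Real.log 2 / Real.log 3) = (2 : ℝ)⁻¹ ^ n := by
  rw [Real.log_div_log, ← Real.rpow_natCast, ← Real.rpow_mul (by norm_num), mul_comm,
    Real.rpow_mul (by norm_num), Real.inv_rpow (by norm_num),
    Real.rpow_logb (by norm_num) (by norm_num) (by norm_num), Real.rpow_natCast]

/-- For `s = log 2 / log 3`, the `s`-dimensional Hausdorff measure of the middle-thirds
Cantor set is at least `1/4 > 0`; in particular `dimH C ≥ log 2 / log 3`. -/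
theorem cantor_hausdorff_lower :
    ((0 : ℝ≥0∞) < 1 / 4 ∧ (1 / 4 : ℝ≥0∞) ≤ μH[Real.log 2 / Real.log 3] cantorSet) ∧
    ENNReal.ofReal (Real.log 2 / Real.log 3) ≤ dimH cantorSet := by
  have hσ : 0 < Real.log 2 / Real.log 3 := by positivity
  have hmass := Measure.smul_le_hausdorffMeasure_of_ediam_lt_pow cantorMeasure (θ := 3⁻¹)
    (by norm_num) (by norm_num) hσ fun n s hs ↦ by
      rw [inv_three_pow_rpow_log_two_div_log_three]
      exact cantorMeasure_le_of_ediam_lt hs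
  have hquarter : (1 / 4 : ℝ≥0∞) ≤ μH[Real.log 2 / Real.log 3] cantorSet :=
    calc (1 / 4 : ℝ≥0∞)
        = (ENNReal.ofReal (((3 : ℝ)⁻¹ ^ 2) ^ (Real.log 2 / Real.log 3)) • cantorMeasure)
            cantorSet := by
          rw [inv_three_pow_rpow_log_two_div_log_three, Measure.smul_apply,
            cantorMeasure_cantorSet, smul_eq_mul, mul_one, inv_pow,
            ENNReal.ofReal_inv_of_pos (by norm_num)]
          norm_num
      _ ≤ _ := hmass _
  refine ⟨⟨by norm_num, hquarter⟩, le_dimH_of_hausdorffMeasure_ne_zero ?_⟩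
  rw [Real.coe_toNNReal _ hσ.le]
  exact (lt_of_lt_of_le (by norm_num) hquarter).ne'
end

section
/- Existence and uniqueness of the attractor of an iterated function system: let (X, d) be a non-empty complete metric space and let f₁, …, f_N : X → X (N ≥ 1 finite) be contraction mappings, i.e. for each i there is r_i ∈ [0,1) with d(f_i(x), f_i(y)) ≤ r_i · d(x, y) for all x, y ∈ X. Then there exists a unique non-empty compact set A ⊆ X such that A = ⋃_{i=1}^N f_i(A). -/
/-!
The Hutchinson operator `K ↦ ⋃ i, f i '' K` maps nonempty compact sets to nonempty compact sets,
and it is a contraction for the Hausdorff distance with the largest of the contraction ratios.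
Nonempty compact subsets of a complete space form a complete metric space, so the Banach fixed
point theorem gives exactly one fixed point, which is the attractor.
-/

open Set Metric TopologicalSpace Function
open scoped NNReal ENNReal

section Lipschitz

variable {α β : Type*} [PseudoEMetricSpace α] [PseudoEMetricSpace β] {K : ℝ≥0} {f : α → β}
  {s t : Set α}

-- Nonemptiness is needed: for `K = 0` and `t = ∅` the right-hand side is `0 * ∞ = 0`.
theorem LipschitzWith.infEDist_image_le (hf : LipschitzWith K f) (ht : t.Nonempty) (x : α) :
    infEDist (f x) (f '' t) ≤ K * infEDist x t := by
  rcases eq_or_ne K 0 with rfl | hK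
  · obtain ⟨y, hy⟩ := ht
    simpa using (infEDist_le_edist_of_mem (mem_image_of_mem f hy)).trans (hf x y)
  · simp only [infEDist, iInf_image,
      ENNReal.mul_iInf_of_ne (ENNReal.coe_ne_zero.2 hK) ENNReal.coe_ne_top]
    exact iInf₂_mono fun y _ => hf x y

theorem LipschitzWith.hausdorffEDist_image_le (hf : LipschitzWith K f) (hs : s.Nonempty)
    (ht : t.Nonempty) : hausdorffEDist (f '' s) (f '' t) ≤ K * hausdorffEDist s t := by
  refine hausdorffEDist_le_of_infEDist ?_ ?_ <;> rintro _ ⟨x, hx, rfl⟩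
  · exact (hf.infEDist_image_le ht x).trans (by gcongr; exact infEDist_le_hausdorffEDist_of_mem hx)
  · rw [hausdorffEDist_comm]
    exact (hf.infEDist_image_le hs x).trans (by gcongr; exact infEDist_le_hausdorffEDist_of_mem hx)

end Lipschitz

section Hutchinson

variable {ι X : Type*} [Finite ι] [Nonempty ι]

def hutchinson [TopologicalSpace X] (f : ι → X → X) (hf : ∀ i, Continuous (f i))
    (A : NonemptyCompacts X) : NonemptyCompacts X where
  carrier := ⋃ i, f i '' A
  isCompact' := isCompact_iUnion fun i => A.isCompact.image (hf i)
  nonempty' := nonempty_iUnion.2 ⟨Classical.arbitrary ι, A.nonempty.image _⟩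

theorem isFixedPt_hutchinson_iff [TopologicalSpace X] {f : ι → X → X}
    {hf : ∀ i, Continuous (f i)} {A : NonemptyCompacts X} :
    IsFixedPt (hutchinson f hf) A ↔ (A : Set X) = ⋃ i, f i '' A := by
  rw [IsFixedPt, ← SetLike.coe_set_eq, eq_comm]
  rfl

theorem lipschitzWith_hutchinson [EMetricSpace X] {K : ℝ≥0} {f : ι → X → X}
    (hf : ∀ i, LipschitzWith K (f i)) :
    LipschitzWith K (hutchinson f fun i => (hf i).continuous) := fun A B =>
  hausdorffEDist_iUnion_le.trans <|
    iSup_le fun i => (hf i).hausdorffEDist_image_le A.nonempty B.nonempty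

end Hutchinson

theorem ContractingWith.existsUnique_isFixedPt {α : Type*} [MetricSpace α] [Nonempty α]
    [CompleteSpace α] {K : ℝ≥0} {f : α → α} (hf : ContractingWith K f) : ∃! x, IsFixedPt f x :=
  ⟨fixedPoint f hf, hf.fixedPoint_isFixedPt, fun _ hx => hf.fixedPoint_unique hx⟩

/-- Existence and uniqueness of the attractor of an iterated function system: if `X` is a
non-empty complete metric space and `f 1, …, f N` (`N ≥ 1`) are contractions on `X` with
ratios `r i ∈ [0,1)`, then there is a unique non-empty compact set `A ⊆ X` with
`A = ⋃ i, f i '' A`. -/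
theorem ifs_attractor_exists_unique
    {X : Type*} [MetricSpace X] [CompleteSpace X] [Nonempty X]
    (N : ℕ) (hN : 1 ≤ N) (f : Fin N → X → X) (r : Fin N → ℝ)
    (hr : ∀ i, 0 ≤ r i ∧ r i < 1)
    (hf : ∀ i x y, dist (f i x) (f i y) ≤ r i * dist x y) :
    ∃! A : Set X, A.Nonempty ∧ IsCompact A ∧ A = ⋃ i, f i '' A := by
  have : Nonempty (Fin N) := ⟨⟨0, hN⟩⟩
  set K : ℝ≥0 := Finset.univ.sup fun i => (r i).toNNReal
  have hK : K < 1 := Finset.sup_lt_iff one_pos |>.2 fun i _ => Real.toNNReal_lt_one.2 (hr i).2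
  have hrK : ∀ i, r i ≤ K := fun i => (Real.le_coe_toNNReal _).trans <|
    NNReal.coe_le_coe.2 <| Finset.le_sup (f := fun i => (r i).toNNReal) (Finset.mem_univ i)
  have hlip : ∀ i, LipschitzWith K (f i) := fun i =>
    .of_dist_le_mul fun x y => (hf i x y).trans <| by gcongr; exact hrK i
  obtain ⟨A, hA, hA_unique⟩ :=
    ContractingWith.existsUnique_isFixedPt ⟨hK, lipschitzWith_hutchinson hlip⟩
  refine ⟨A, ⟨A.nonempty, A.isCompact, isFixedPt_hutchinson_iff.1 hA⟩, ?_⟩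
  rintro B ⟨hB_ne, hB_compact, hB⟩
  exact congrArg SetLike.coe (hA_unique ⟨⟨B, hB_compact⟩, hB_ne⟩ (isFixedPt_hutchinson_iff.2 hB))
end

section
/- Moran–Hutchinson theorem: let f₁, …, f_N : ℝ^n → ℝ^n (N ≥ 1 finite) be similitudes with ratios r_i ∈ (0,1), i.e. dist(f_i(x), f_i(y)) = r_i · dist(x, y) for all x, y. Let A ⊆ ℝ^n be a non-empty compact set with A = ⋃_{i=1}^N f_i(A), and suppose the open set condition holds: there exists a non-empty bounded open set V ⊆ ℝ^n with f_i(V) ⊆ V for all i and f_i(V) ∩ f_j(V) = ∅ for all i ≠ j. If s ≥ 0 is a real number satisfying ∑_{i=1}^N r_i^s = 1, then dimH(A) = s. -/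
/-!
The upper bound holds for any contractions: the images of `A` under the compositions `f_w` along
the words `w` of length `k` cover `A`, have diameters at most `r_w * diam A`, where
`∑_w r_w ^ s = (∑ i, r i ^ s) ^ k ≤ 1`, and shrink uniformly; hence `μH[s] A ≤ (diam A) ^ s < ∞`.

The lower bound is Hutchinson's argument. Call a word `v = u ++ [i]` a `ρ`-cut if
`r_v ≤ ρ < r_u`. Distinct `ρ`-cuts are incomparable for the prefix order, so by the open set
condition their images of `V` are disjoint; each contains a ball of radius comparable to `ρ`, so a
volume count shows that boundedly many of them meet any ball of radius `ρ`. If balls `B_m` of radii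
`ρ_m < 1` cover `A`, every long word has, for some `m`, a `ρ_m`-cut prefix whose image of `A`
meets `B_m`, and Kraft's inequality (with weights `r i ^ s`, a set of words containing a prefix of
every word of length `K` has total weight at least `1`) gives `1 ≤ q * ∑ m, ρ_m ^ s`. By
compactness every countable cover of `A` by small sets yields such a finite ball cover with
comparable radii, so `μH[s] A > 0`.
-/

open MeasureTheory Metric Set Function Filter Finset Topology Module
open scoped ENNReal NNReal

theorem Finite.exists_pos_forall_le {ι : Type*} [Finite ι] {r : ι → ℝ} (hr : ∀ i, 0 < r i) :
    ∃ c > 0, ∀ i, c ≤ r i := by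
  rcases isEmpty_or_nonempty ι with _ | _
  · exact ⟨1, one_pos, isEmptyElim⟩
  · obtain ⟨j, hj⟩ := Finite.exists_min r
    exact ⟨r j, hr j, hj⟩

theorem Finite.exists_nonneg_lt_one_forall_le {ι : Type*} [Finite ι] {r : ι → ℝ}
    (hr : ∀ i, r i < 1) : ∃ c, 0 ≤ c ∧ c < 1 ∧ ∀ i, r i ≤ c := by
  rcases isEmpty_or_nonempty ι with _ | _
  · exact ⟨0, le_rfl, one_pos, isEmptyElim⟩
  · obtain ⟨j, hj⟩ := Finite.exists_max r
    exact ⟨max (r j) 0, le_max_right _ _, max_lt (hr j) one_pos,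
      fun i => (hj i).trans (le_max_left _ _)⟩

theorem ball_subset_image_ball {X : Type*} [PseudoMetricSpace X] {g : X → X} {c : ℝ} (hc : 0 < c)
    (hg : ∀ x y, dist (g x) (g y) = c * dist x y) (hsurj : Surjective g) (x : X) (δ : ℝ) :
    ball (g x) (c * δ) ⊆ g '' ball x δ := by
  intro y hy
  obtain ⟨z, rfl⟩ := hsurj y
  rw [mem_ball, hg] at hy
  exact ⟨z, mem_ball.2 (lt_of_mul_lt_mul_left hy hc.le), rfl⟩

theorem image_subset_ball_of_inter_ball_nonempty {X : Type*} [PseudoMetricSpace X] {g : X → X}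
    {c ρ R : ℝ} {A V : Set X} {v₀ x : X} (hg : ∀ y z, dist (g y) (g z) ≤ c * dist y z)
    (hc : c ≤ ρ) (hR : A ∪ V ⊆ closedBall v₀ R) (hAx : (g '' A ∩ ball x ρ).Nonempty) :
    g '' V ⊆ ball x ((1 + 2 * R) * ρ) := by
  obtain ⟨_, ⟨a, ha, rfl⟩, hax⟩ := hAx
  have hρ : 0 < ρ := pos_of_mem_ball hax
  rintro _ ⟨z, hz, rfl⟩
  have hza : dist z a ≤ 2 * R := by
    linarith [dist_triangle_right z a v₀, mem_closedBall.1 (hR (Or.inr hz)),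
      mem_closedBall.1 (hR (Or.inl ha))]
  rw [mem_ball]
  calc dist (g z) x ≤ dist (g z) (g a) + dist (g a) x := dist_triangle _ _ _
    _ < ρ * (2 * R) + ρ :=
        add_lt_add_of_le_of_lt ((hg z a).trans (mul_le_mul hc hza dist_nonneg hρ.le)) hax
    _ = (1 + 2 * R) * ρ := by ring

theorem surjective_of_dist_eq_mul {E : Type*} [NormedAddCommGroup E] [NormedSpace ℝ E]
    [FiniteDimensional ℝ E] [StrictConvexSpace ℝ E] {g : E → E} {c : ℝ} (hc : 0 < c)
    (hg : ∀ x y, dist (g x) (g y) = c * dist x y) : Surjective g := by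
  have hiso : Isometry fun x => c⁻¹ • g x := Isometry.of_dist_eq fun x y => by
    rw [dist_smul₀, hg, Real.norm_eq_abs, abs_inv, abs_of_pos hc, inv_mul_cancel_left₀ hc.ne']
  let e := hiso.affineIsometryOfStrictConvexSpace.toAffineMap
  have he : Surjective e := e.linear_surjective_iff.1 <|
    LinearMap.injective_iff_surjective.1 (e.linear_injective_iff.2 hiso.injective)
  intro y
  obtain ⟨x, hx⟩ := he (c⁻¹ • y)
  refine ⟨x, ?_⟩
  have : c⁻¹ • g x = c⁻¹ • y := hx
  rwa [smul_right_inj (inv_ne_zero hc.ne')] at this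

theorem card_le_of_pairwiseDisjoint_ball {E α : Type*} [NormedAddCommGroup E] [NormedSpace ℝ E]
    [FiniteDimensional ℝ E] {T : Finset α} {y : α → E} {x : E} {δ ρ : ℝ} (hδ : 0 < δ)
    (hρ : 0 < ρ) (hdisj : (T : Set α).PairwiseDisjoint fun a => ball (y a) δ)
    (hsub : ∀ a ∈ T, ball (y a) δ ⊆ ball x ρ) :
    (#T : ℝ) ≤ (ρ / δ) ^ finrank ℝ E := by
  borelize E
  set μ : Measure E := Measure.addHaar
  have key : (#T : ℝ≥0∞) * ENNReal.ofReal (δ ^ finrank ℝ E) * μ (ball 0 1) ≤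
      ENNReal.ofReal (ρ ^ finrank ℝ E) * μ (ball 0 1) :=
    calc (#T : ℝ≥0∞) * ENNReal.ofReal (δ ^ finrank ℝ E) * μ (ball 0 1)
        = ∑ a ∈ T, μ (ball (y a) δ) := by
          simp only [μ.addHaar_ball_of_pos _ hδ, sum_const, nsmul_eq_mul, mul_assoc]
      _ = μ (⋃ a ∈ T, ball (y a) δ) :=
          (measure_biUnion_finset hdisj fun a _ => measurableSet_ball).symm
      _ ≤ μ (ball x ρ) := measure_mono (iUnion₂_subset hsub)
      _ = ENNReal.ofReal (ρ ^ finrank ℝ E) * μ (ball 0 1) := μ.addHaar_ball_of_pos x hρ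
  rw [ENNReal.mul_le_mul_iff_left (measure_ball_pos μ 0 one_pos).ne' measure_ball_lt_top.ne,
    ← ENNReal.ofReal_natCast, ← ENNReal.ofReal_mul (by positivity),
    ENNReal.ofReal_le_ofReal_iff (by positivity)] at key
  rwa [div_pow, le_div_iff₀ (by positivity)]

section FiniteBallCovers

variable {X : Type*} [MetricSpace X] {A : Set X} {s C : ℝ}

theorem exists_mem_Ioc_ofReal_rpow_le {a : ℝ} (hs : 0 < s) (ha : 0 < a) {δ : ℝ≥0}
    (hδ : 0 < δ) : ∃ η ∈ Set.Ioc 0 a, ENNReal.ofReal η ^ s ≤ δ := by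
  have hδs : 0 < (δ : ℝ) ^ s⁻¹ := by positivity
  refine ⟨min a ((δ : ℝ) ^ s⁻¹), ⟨lt_min ha hδs, min_le_left _ _⟩, ?_⟩
  calc ENNReal.ofReal (min a ((δ : ℝ) ^ s⁻¹)) ^ s
      ≤ ENNReal.ofReal ((δ : ℝ) ^ s⁻¹) ^ s :=
        ENNReal.rpow_le_rpow (ENNReal.ofReal_le_ofReal (min_le_right _ _)) hs.le
    _ = δ := by
        rw [ENNReal.ofReal_rpow_of_nonneg hδs.le hs.le, Real.rpow_inv_rpow δ.coe_nonneg hs.ne',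
          ENNReal.ofReal_coe_nnreal]

theorem exists_radius_of_ediam_le {t : Set X} (ht : ediam t ≤ 4⁻¹) {η : ℝ}
    (hη : η ∈ Set.Ioc 0 4⁻¹) (hs : 0 ≤ s) :
    ∃ ρ ∈ Set.Ioo (0 : ℝ) 1, (∀ x ∈ t, t ⊆ ball x ρ) ∧
      ENNReal.ofReal (ρ ^ s) ≤ 2 ^ s * (ediam t ^ s + ENNReal.ofReal η ^ s) := by
  have hdiam : ediam t ≠ ⊤ := (ht.trans_lt (by norm_num)).ne
  have hd : (ediam t).toReal ≤ 4⁻¹ :=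
    ENNReal.toReal_le_of_le_ofReal (by norm_num) (by simpa using ht)
  have hmax := max_cases (ediam t).toReal η
  -- `η > 0` keeps the radius positive when `t` has diameter `0`.
  refine ⟨2 * max (ediam t).toReal η, ⟨by grind, by grind⟩, fun x hx y hy => ?_, ?_⟩
  · have := dist_le_diam_of_mem' hdiam hy hx
    exact mem_ball.2 (by simp only [diam] at this; grind)
  · rw [← ENNReal.ofReal_rpow_of_nonneg (by grind) hs, ENNReal.ofReal_mul zero_le_two,
      ENNReal.ofReal_max, ENNReal.ofReal_toReal hdiam, ENNReal.mul_rpow_of_nonneg _ _ hs,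
      ENNReal.ofReal_ofNat]
    gcongr
    rcases max_choice (ediam t) (ENNReal.ofReal η) with h | h <;> rw [h]
    · exact le_self_add
    · exact le_add_self

theorem one_le_mul_tsum_ediam_rpow_add (hAne : A.Nonempty) (hAc : IsCompact A) (hs : 0 < s)
    (hC : ∀ (F : Finset ℕ) (x : ℕ → X) (ρ : ℕ → ℝ), (∀ m ∈ F, ρ m ∈ Set.Ioo 0 1) →
      A ⊆ ⋃ m ∈ F, ball (x m) (ρ m) → 1 ≤ C * ∑ m ∈ F, ρ m ^ s)
    {t : ℕ → Set X} (htA : A ⊆ ⋃ m, t m) (ht : ∀ m, ediam (t m) ≤ 4⁻¹) {ε : ℝ≥0∞}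
    (hε : ε ≠ 0) :
    1 ≤ ENNReal.ofReal C * 2 ^ s * (∑' m, (⨆ _ : (t m).Nonempty, ediam (t m) ^ s) + ε) := by
  obtain ⟨δ, hδ0, hδε⟩ := ENNReal.exists_pos_sum_of_countable hε ℕ
  choose η hη hηδ using fun m =>
    exists_mem_Ioc_ofReal_rpow_le hs (by norm_num : (0 : ℝ) < 4⁻¹) (hδ0 m)
  choose ρ hρ hρt hρs using fun m => exists_radius_of_ediam_le (ht m) (hη m) hs.le
  have := hAne.to_type
  let x (m : ℕ) : X := Classical.epsilon (· ∈ t m)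
  obtain ⟨F, hFne, hF, hAF⟩ := hAc.elim_finite_subcover_image (b := {m | (t m).Nonempty})
    (c := fun m => ball (x m) (ρ m)) (fun m _ => isOpen_ball) fun a ha => by
      obtain ⟨m, hm⟩ := mem_iUnion.1 (htA ha)
      exact mem_iUnion₂.2 ⟨m, ⟨a, hm⟩, hρt m _ (Classical.epsilon_spec ⟨a, hm⟩) hm⟩
  have hterm (m : ℕ) (hm : (t m).Nonempty) :
      ENNReal.ofReal (ρ m ^ s) ≤ 2 ^ s * ((⨆ _ : (t m).Nonempty, ediam (t m) ^ s) + δ m) := by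
    rw [iSup_pos hm]
    exact (hρs m).trans (by gcongr; exact hηδ m)
  have hC' := hC hF.toFinset x ρ (fun m _ => hρ m) (by simpa using hAF)
  calc (1 : ℝ≥0∞) ≤ ENNReal.ofReal (C * ∑ m ∈ hF.toFinset, ρ m ^ s) := by
        simpa using ENNReal.ofReal_le_ofReal hC'
    _ = ENNReal.ofReal C * ∑ m ∈ hF.toFinset, ENNReal.ofReal (ρ m ^ s) := by
        rw [ENNReal.ofReal_mul' (sum_nonneg fun m _ => Real.rpow_nonneg (hρ m).1.le s),
          ENNReal.ofReal_sum_of_nonneg fun m _ => Real.rpow_nonneg (hρ m).1.le s]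
    _ ≤ ENNReal.ofReal C * ∑ m ∈ hF.toFinset,
          2 ^ s * ((⨆ _ : (t m).Nonempty, ediam (t m) ^ s) + δ m) := by
        gcongr with m hm
        exact hterm m (hFne (hF.mem_toFinset.1 hm))
    _ ≤ ENNReal.ofReal C * 2 ^ s * (∑' m, (⨆ _ : (t m).Nonempty, ediam (t m) ^ s) + ε) := by
        rw [← mul_sum, sum_add_distrib, mul_assoc]
        gcongr
        · exact ENNReal.sum_le_tsum _
        · exact (ENNReal.sum_le_tsum _).trans hδε.le

theorem hausdorffMeasure_ne_zero_of_forall_finite_ball_cover [MeasurableSpace X] [BorelSpace X]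
    (hAne : A.Nonempty) (hAc : IsCompact A) (hs : 0 < s)
    (hC : ∀ (F : Finset ℕ) (x : ℕ → X) (ρ : ℕ → ℝ), (∀ m ∈ F, ρ m ∈ Set.Ioo 0 1) →
      A ⊆ ⋃ m ∈ F, ball (x m) (ρ m) → 1 ≤ C * ∑ m ∈ F, ρ m ^ s) :
    μH[s] A ≠ 0 := by
  have hK : ENNReal.ofReal C * 2 ^ s ≠ ⊤ :=
    ENNReal.mul_ne_top ENNReal.ofReal_ne_top (ENNReal.rpow_ne_top_of_nonneg hs.le (by simp))
  have hle : (ENNReal.ofReal C * 2 ^ s)⁻¹ ≤ μH[s] A := by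
    rw [Measure.hausdorffMeasure_apply]
    refine le_iSup₂_of_le 4⁻¹ (by norm_num) (le_iInf fun t => le_iInf₂ fun htA ht => ?_)
    refine ENNReal.le_of_forall_pos_le_add fun ε hε hS => ?_
    rw [ENNReal.inv_le_iff_le_mul (fun h => absurd h (by simpa using hS.ne)) (absurd · hK)]
    exact one_le_mul_tsum_ediam_rpow_add hAne hAc hs hC htA ht (by simpa using hε.ne')
  exact ((ENNReal.inv_pos.2 hK).trans_le hle).ne'

end FiniteBallCovers

namespace IFS

variable {ι X : Type*}

def wordMap (f : ι → X → X) : List ι → X → X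
  | [] => id
  | i :: w => f i ∘ wordMap f w

def wordRatio (r : ι → ℝ) (w : List ι) : ℝ := (w.map r).prod

section Words

variable {f : ι → X → X} {r : ι → ℝ}

@[simp] theorem wordMap_nil (f : ι → X → X) : wordMap f [] = id := rfl

@[simp] theorem wordMap_cons (f : ι → X → X) (i : ι) (w : List ι) :
    wordMap f (i :: w) = f i ∘ wordMap f w := rfl

theorem wordMap_append (f : ι → X → X) (u v : List ι) :
    wordMap f (u ++ v) = wordMap f u ∘ wordMap f v := by
  induction u with
  | nil => rfl
  | cons i u ih => simp [ih, comp_assoc]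

@[simp] theorem wordRatio_nil (r : ι → ℝ) : wordRatio r [] = 1 := rfl

@[simp] theorem wordRatio_cons (r : ι → ℝ) (i : ι) (w : List ι) :
    wordRatio r (i :: w) = r i * wordRatio r w := List.prod_cons

theorem wordRatio_append (r : ι → ℝ) (u v : List ι) :
    wordRatio r (u ++ v) = wordRatio r u * wordRatio r v := by
  simp [wordRatio]

theorem wordRatio_nonneg (hr : ∀ i, 0 ≤ r i) (w : List ι) : 0 ≤ wordRatio r w :=
  List.prod_nonneg (by simpa using fun i _ => hr i)

theorem wordRatio_pos (hr : ∀ i, 0 < r i) (w : List ι) : 0 < wordRatio r w :=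
  List.prod_pos (by simpa using fun i _ => hr i)

theorem wordRatio_le_pow {c : ℝ} (hr : ∀ i, 0 ≤ r i) (hc : ∀ i, r i ≤ c) (w : List ι) :
    wordRatio r w ≤ c ^ w.length := by
  induction w with
  | nil => simp
  | cons i w ih =>
    rw [wordRatio_cons, List.length_cons, pow_succ']
    exact mul_le_mul (hc i) ih (wordRatio_nonneg hr w) ((hr i).trans (hc i))

theorem wordRatio_le_of_prefix (hr0 : ∀ i, 0 ≤ r i) (hr1 : ∀ i, r i ≤ 1) {u w : List ι}
    (h : u <+: w) : wordRatio r w ≤ wordRatio r u := by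
  obtain ⟨t, rfl⟩ := h
  rw [wordRatio_append]
  exact mul_le_of_le_one_right (wordRatio_nonneg hr0 u)
    ((wordRatio_le_pow hr0 hr1 t).trans_eq (one_pow _))

theorem wordRatio_rpow (hr : ∀ i, 0 ≤ r i) (s : ℝ) (w : List ι) :
    wordRatio (fun i => r i ^ s) w = wordRatio r w ^ s := by
  rw [wordRatio, wordRatio, ← Real.list_prod_map_rpow _ (by simpa using fun i _ => hr i),
    List.map_map]
  rfl

theorem sum_wordRatio_ofFn [Fintype ι] (r : ι → ℝ) (k : ℕ) :
    ∑ w : Fin k → ι, wordRatio r (List.ofFn w) = (∑ i, r i) ^ k := by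
  classical
  rw [← Fin.prod_const, Fintype.prod_sum]
  simp [wordRatio, List.prod_ofFn]

theorem one_le_sum_wordRatio_of_forall_prefix [Fintype ι] {p : ι → ℝ} (hp : ∀ i, 0 ≤ p i)
    (hp1 : 1 ≤ ∑ i, p i) (K : ℕ) (T : Finset (List ι))
    (hT : ∀ w : List ι, w.length = K → ∃ v ∈ T, v <+: w) :
    1 ≤ ∑ v ∈ T, wordRatio p v := by
  classical
  have hnn (v : List ι) : 0 ≤ wordRatio p v := wordRatio_nonneg hp v
  induction K generalizing T with
  | zero =>
    obtain ⟨v, hv, hvw⟩ := hT [] rfl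
    rw [List.prefix_nil.1 hvw] at hv
    simpa using single_le_sum (fun v _ => hnn v) hv
  | succ K ih =>
    by_cases hnil : [] ∈ T
    · simpa using single_le_sum (fun v _ => hnn v) hnil
    let Ti (i : ι) := T.preimage (List.cons i) List.cons_injective.injOn
    have hTi (i : ι) : 1 ≤ ∑ v ∈ Ti i, wordRatio p v := by
      refine ih _ fun w hw => ?_
      obtain ⟨_ | ⟨j, v⟩, hv, hvw⟩ := hT (i :: w) (by simp [hw])
      · exact absurd hv hnil
      · obtain ⟨rfl, hvw'⟩ := List.cons_prefix_cons.1 hvw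
        exact ⟨v, mem_preimage.2 hv, hvw'⟩
    calc 1 ≤ ∑ i, p i := hp1
      _ ≤ ∑ i, p i * ∑ v ∈ Ti i, wordRatio p v :=
          sum_le_sum fun i _ => le_mul_of_one_le_right (hp i) (hTi i)
      _ = ∑ x ∈ univ.sigma Ti, wordRatio p (x.1 :: x.2) := by simp [sum_sigma, mul_sum]
      _ = ∑ v ∈ (univ.sigma Ti).image fun x => x.1 :: x.2, wordRatio p v := by
          rw [sum_image]
          rintro ⟨i, v⟩ - ⟨j, w⟩ - h
          obtain ⟨rfl, rfl⟩ := List.cons_eq_cons.1 h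
          rfl
      _ ≤ ∑ v ∈ T, wordRatio p v := by
          refine sum_le_sum_of_subset_of_nonneg ?_ fun v _ _ => hnn v
          rintro _ h
          obtain ⟨⟨i, v⟩, hv, rfl⟩ := mem_image.1 h
          exact mem_preimage.1 (mem_sigma.1 hv).2

theorem mapsTo_wordMap {S : Set X} (h : ∀ i, MapsTo (f i) S S) (w : List ι) :
    MapsTo (wordMap f w) S S := by
  induction w with
  | nil => exact mapsTo_id S
  | cons i w ih => exact (h i).comp ih

theorem surjective_wordMap (h : ∀ i, Surjective (f i)) (w : List ι) :
    Surjective (wordMap f w) := by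
  induction w with
  | nil => exact surjective_id
  | cons i w ih => exact (h i).comp ih

theorem subset_iUnion_image_wordMap {A : Set X} (hA : A ⊆ ⋃ i, f i '' A) (k : ℕ) :
    A ⊆ ⋃ w : Fin k → ι, wordMap f (List.ofFn w) '' A := by
  induction k with
  | zero => exact fun a ha => mem_iUnion.2 ⟨Fin.elim0, a, ha, rfl⟩
  | succ k ih =>
    intro a ha
    obtain ⟨i, b, hb, rfl⟩ := mem_iUnion.1 (hA ha)
    obtain ⟨w, c, hc, rfl⟩ := mem_iUnion.1 (ih hb)
    exact mem_iUnion.2 ⟨Fin.cons i w, c, hc, by simp [List.ofFn_succ]⟩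

end Words

section PseudoMetric

variable [PseudoMetricSpace X] {f : ι → X → X} {r : ι → ℝ}

theorem dist_wordMap_le (hf : ∀ i x y, dist (f i x) (f i y) ≤ r i * dist x y)
    (hr : ∀ i, 0 ≤ r i) (w : List ι) (x y : X) :
    dist (wordMap f w x) (wordMap f w y) ≤ wordRatio r w * dist x y := by
  induction w with
  | nil => simp
  | cons i w ih =>
    calc dist (f i (wordMap f w x)) (f i (wordMap f w y))
        ≤ r i * dist (wordMap f w x) (wordMap f w y) := hf i _ _
      _ ≤ r i * (wordRatio r w * dist x y) := mul_le_mul_of_nonneg_left ih (hr i)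
      _ = wordRatio r (i :: w) * dist x y := by rw [wordRatio_cons, mul_assoc]

theorem dist_wordMap (hf : ∀ i x y, dist (f i x) (f i y) = r i * dist x y) (w : List ι)
    (x y : X) : dist (wordMap f w x) (wordMap f w y) = wordRatio r w * dist x y := by
  induction w with
  | nil => simp
  | cons i w ih => simp [hf, ih, mul_assoc]

theorem ediam_image_wordMap_le (hf : ∀ i x y, dist (f i x) (f i y) ≤ r i * dist x y)
    (hr : ∀ i, 0 ≤ r i) (w : List ι) (A : Set X) :
    ediam (wordMap f w '' A) ≤ ENNReal.ofReal (wordRatio r w) * ediam A :=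
  (LipschitzWith.of_dist_le_mul fun x y => by
    rw [Real.coe_toNNReal _ (wordRatio_nonneg hr w)]
    exact dist_wordMap_le hf hr w x y).ediam_image_le A

structure OpenSetCondition (f : ι → X → X) (V : Set X) : Prop where
  isOpen : IsOpen V
  nonempty : V.Nonempty
  isBounded : Bornology.IsBounded V
  mapsTo : ∀ i, MapsTo (f i) V V
  pairwise_disjoint : Pairwise (Disjoint on fun i => f i '' V)

theorem OpenSetCondition.disjoint_image_wordMap {V : Set X} (hV : OpenSetCondition f V)
    (hinj : ∀ i, Injective (f i)) :
    ∀ {u w : List ι}, ¬u <+: w → ¬w <+: u → Disjoint (wordMap f u '' V) (wordMap f w '' V)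
  | [], _, hu, _ => (hu List.nil_prefix).elim
  | _ :: _, [], _, hw => (hw List.nil_prefix).elim
  | i :: u, j :: w, hu, hw => by
    simp only [wordMap_cons, image_comp]
    rcases eq_or_ne i j with rfl | hij
    · exact (disjoint_image_iff (hinj i)).2 <| hV.disjoint_image_wordMap hinj
        (fun h => hu (List.cons_prefix_cons.2 ⟨rfl, h⟩))
        (fun h => hw (List.cons_prefix_cons.2 ⟨rfl, h⟩))
    · exact (hV.pairwise_disjoint hij).mono
        (image_mono (mapsTo_wordMap hV.mapsTo u).image_subset)
        (image_mono (mapsTo_wordMap hV.mapsTo w).image_subset)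

end PseudoMetric

def IsCut (r : ι → ℝ) (ρ : ℝ) (v : List ι) : Prop :=
  ∃ u i, v = u ++ [i] ∧ wordRatio r v ≤ ρ ∧ ρ < wordRatio r u

section Cut

variable {r : ι → ℝ} {ρ : ℝ} {v : List ι}

theorem exists_prefix_isCut (hρ : ρ < 1) {w : List ι} (hw : wordRatio r w ≤ ρ) :
    ∃ v, v <+: w ∧ IsCut r ρ v := by
  induction w using List.reverseRecOn with
  | nil => exact absurd hw (by simpa using hρ)
  | append_singleton u i ih =>
    by_cases hu : wordRatio r u ≤ ρ
    · obtain ⟨v, hv, hcut⟩ := ih hu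
      exact ⟨v, hv.trans (List.prefix_append u [i]), hcut⟩
    · exact ⟨u ++ [i], List.prefix_rfl, u, i, rfl, hw, not_le.1 hu⟩

theorem IsCut.wordRatio_le (h : IsCut r ρ v) : wordRatio r v ≤ ρ := by
  obtain ⟨u, i, rfl, h, -⟩ := h
  exact h

theorem IsCut.mul_le_wordRatio {c : ℝ} (h : IsCut r ρ v) (hr : ∀ i, 0 ≤ r i)
    (hc : ∀ i, c ≤ r i) (hρ : 0 ≤ ρ) : c * ρ ≤ wordRatio r v := by
  obtain ⟨u, i, rfl, -, hu⟩ := h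
  rw [wordRatio_append, wordRatio_cons, wordRatio_nil, mul_one, mul_comm (wordRatio r u)]
  exact mul_le_mul (hc i) hu.le hρ (hr i)

theorem IsCut.not_prefix (hr0 : ∀ i, 0 ≤ r i) (hr1 : ∀ i, r i ≤ 1) {w : List ι}
    (hv : IsCut r ρ v) (hw : IsCut r ρ w) (hvw : v ≠ w) : ¬v <+: w := by
  obtain ⟨u, i, rfl, -, hu⟩ := hw
  intro h
  rcases List.prefix_concat_iff.1 h with h | h
  · exact hvw h
  · linarith [wordRatio_le_of_prefix hr0 hr1 h, hv.wordRatio_le]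

theorem exists_isCut_prefix_inter_nonempty {f : ι → X → X} {A : Set X}
    (hA : ∀ i, MapsTo (f i) A A) (hAne : A.Nonempty) {α : Type*} {F : Finset α} {U : α → Set X}
    {ρ : α → ℝ} (hρ : ∀ m ∈ F, ρ m < 1) (hAF : A ⊆ ⋃ m ∈ F, U m) {w : List ι}
    (hw : ∀ m ∈ F, wordRatio r w ≤ ρ m) :
    ∃ m ∈ F, ∃ v, v <+: w ∧ IsCut r (ρ m) v ∧ (wordMap f v '' A ∩ U m).Nonempty := by
  obtain ⟨a, ha⟩ := hAne
  obtain ⟨m, hm, hwa⟩ := mem_iUnion₂.1 (hAF (mapsTo_wordMap hA w ha))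
  obtain ⟨v, ⟨u, rfl⟩, hcut⟩ := exists_prefix_isCut (hρ m hm) (hw m hm)
  rw [wordMap_append] at hwa
  exact ⟨m, hm, v, List.prefix_append v u, hcut, _,
    mem_image_of_mem _ (mapsTo_wordMap hA u ha), hwa⟩

end Cut

section UpperBound

variable [Fintype ι] [MetricSpace X] {f : ι → X → X} {r : ι → ℝ} {A : Set X} {s : ℝ}

theorem hausdorffMeasure_le_ediam_rpow [MeasurableSpace X] [BorelSpace X]
    (hf : ∀ i x y, dist (f i x) (f i y) ≤ r i * dist x y) (hr0 : ∀ i, 0 ≤ r i)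
    (hr1 : ∀ i, r i < 1) (hAb : Bornology.IsBounded A) (hA : A ⊆ ⋃ i, f i '' A) (hs : 0 ≤ s)
    (hsum : ∑ i, r i ^ s ≤ 1) : μH[s] A ≤ ediam A ^ s := by
  obtain ⟨c, hc0, hc1, hrc⟩ := Finite.exists_nonneg_lt_one_forall_le hr1
  have hdiam (k : ℕ) (w : Fin k → ι) :
      ediam (wordMap f (List.ofFn w) '' A) ≤ ENNReal.ofReal c ^ k * ediam A := by
    refine (ediam_image_wordMap_le hf hr0 _ A).trans (mul_le_mul_left ?_ _)
    rw [← ENNReal.ofReal_pow hc0]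
    exact ENNReal.ofReal_le_ofReal (by simpa using wordRatio_le_pow hr0 hrc (List.ofFn w))
  have hsum_le (k : ℕ) :
      ∑ w : Fin k → ι, ediam (wordMap f (List.ofFn w) '' A) ^ s ≤ ediam A ^ s :=
    calc ∑ w : Fin k → ι, ediam (wordMap f (List.ofFn w) '' A) ^ s
        ≤ ∑ w : Fin k → ι, ENNReal.ofReal (wordRatio r (List.ofFn w) ^ s) * ediam A ^ s := by
          refine sum_le_sum fun w _ => ?_
          rw [← ENNReal.ofReal_rpow_of_nonneg (wordRatio_nonneg hr0 _) hs,
            ← ENNReal.mul_rpow_of_nonneg _ _ hs]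
          exact ENNReal.rpow_le_rpow (ediam_image_wordMap_le hf hr0 _ A) hs
      _ = ENNReal.ofReal ((∑ i, r i ^ s) ^ k) * ediam A ^ s := by
          rw [← sum_mul, ← ENNReal.ofReal_sum_of_nonneg fun w _ => by
            exact Real.rpow_nonneg (wordRatio_nonneg hr0 _) s]
          simp only [← wordRatio_rpow hr0, sum_wordRatio_ofFn]
      _ ≤ ediam A ^ s := by
          refine mul_le_of_le_one_left bot_le ?_
          rw [ENNReal.ofReal_le_one]
          exact pow_le_one₀ (sum_nonneg fun i _ => Real.rpow_nonneg (hr0 i) s) hsum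
  have hshrink : Tendsto (fun k => ENNReal.ofReal c ^ k * ediam A) atTop (𝓝 0) := by
    simpa using ENNReal.Tendsto.mul_const
      (ENNReal.tendsto_pow_atTop_nhds_zero_iff.2 (ENNReal.ofReal_lt_one.2 hc1))
      (Or.inr hAb.ediam_ne_top)
  calc μH[s] A
      ≤ liminf (fun k => ∑ w : Fin k → ι, ediam (wordMap f (List.ofFn w) '' A) ^ s) atTop :=
        Measure.hausdorffMeasure_le_liminf_sum s A _ hshrink
          (fun k w => wordMap f (List.ofFn w) '' A) (.of_forall hdiam)
          (.of_forall (subset_iUnion_image_wordMap hA))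
    _ ≤ ediam A ^ s := liminf_le_of_frequently_le' (.of_forall hsum_le)

theorem dimH_le_ofReal (hf : ∀ i x y, dist (f i x) (f i y) ≤ r i * dist x y)
    (hr0 : ∀ i, 0 ≤ r i) (hr1 : ∀ i, r i < 1) (hAb : Bornology.IsBounded A)
    (hA : A ⊆ ⋃ i, f i '' A) (hs : 0 ≤ s) (hsum : ∑ i, r i ^ s ≤ 1) :
    dimH A ≤ ENNReal.ofReal s := by
  borelize X
  refine dimH_le_of_hausdorffMeasure_ne_top ?_
  rw [Real.coe_toNNReal _ hs]
  exact ((hausdorffMeasure_le_ediam_rpow hf hr0 hr1 hAb hA hs hsum).trans_lt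
    (ENNReal.rpow_lt_top_of_nonneg hs hAb.ediam_ne_top)).ne

end UpperBound

section LowerBound

variable [Fintype ι] {E : Type*} [NormedAddCommGroup E] [NormedSpace ℝ E] [FiniteDimensional ℝ E]
  [StrictConvexSpace ℝ E] {f : ι → E → E} {r : ι → ℝ} {A V : Set E} {s : ℝ}

theorem exists_forall_card_isCut_le (hf : ∀ i x y, dist (f i x) (f i y) = r i * dist x y)
    (hr : ∀ i, r i ∈ Set.Ioo 0 1) (hV : OpenSetCondition f V) (hAb : Bornology.IsBounded A) :
    ∃ q : ℝ, ∀ (ρ : ℝ) (x : E) (T : Finset (List ι)), 0 < ρ →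
      (∀ v ∈ T, IsCut r ρ v ∧ (wordMap f v '' A ∩ ball x ρ).Nonempty) → (#T : ℝ) ≤ q := by
  have hr0 (i : ι) : 0 ≤ r i := (hr i).1.le
  obtain ⟨v₀, hv₀⟩ := hV.nonempty
  obtain ⟨δ, hδ, hδV⟩ := isOpen_iff.1 hV.isOpen v₀ hv₀
  obtain ⟨R, hR⟩ := (hAb.union hV.isBounded).subset_closedBall v₀
  have hR0 : 0 ≤ R := by simpa using hR (mem_union_right A hv₀)
  obtain ⟨c, hc, hrc⟩ := Finite.exists_pos_forall_le fun i => (hr i).1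
  refine ⟨((1 + 2 * R) / (c * δ)) ^ finrank ℝ E, fun ρ x T hρ hT => ?_⟩
  have hinner : ∀ v ∈ T, ball (wordMap f v v₀) (c * ρ * δ) ⊆ wordMap f v '' V := fun v hv =>
    calc ball (wordMap f v v₀) (c * ρ * δ) ⊆ ball (wordMap f v v₀) (wordRatio r v * δ) :=
          ball_subset_ball <| mul_le_mul_of_nonneg_right
            ((hT v hv).1.mul_le_wordRatio hr0 hrc hρ.le) hδ.le
      _ ⊆ wordMap f v '' ball v₀ δ :=
          ball_subset_image_ball (wordRatio_pos (fun i => (hr i).1) v) (dist_wordMap hf v)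
            (surjective_wordMap (fun i => surjective_of_dist_eq_mul (hr i).1 (hf i)) v) v₀ δ
      _ ⊆ wordMap f v '' V := image_mono hδV
  have houter : ∀ v ∈ T, wordMap f v '' V ⊆ ball x ((1 + 2 * R) * ρ) := fun v hv =>
    image_subset_ball_of_inter_ball_nonempty (fun y z => (dist_wordMap hf v y z).le)
      (hT v hv).1.wordRatio_le hR (hT v hv).2
  have hinj (i : ι) : Injective (f i) := fun x y h =>
    dist_eq_zero.1 <| (mul_eq_zero.1 (by rw [← hf, h, dist_self])).resolve_left (hr i).1.ne'
  have hdisj : (T : Set (List ι)).PairwiseDisjoint fun v => ball (wordMap f v v₀) (c * ρ * δ) :=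
    fun v hv w hw hvw => (hV.disjoint_image_wordMap hinj
      ((hT v hv).1.not_prefix hr0 (fun i => (hr i).2.le) (hT w hw).1 hvw)
      ((hT w hw).1.not_prefix hr0 (fun i => (hr i).2.le) (hT v hv).1 hvw.symm)).mono
      (hinner v hv) (hinner w hw)
  calc (#T : ℝ) ≤ ((1 + 2 * R) * ρ / (c * ρ * δ)) ^ finrank ℝ E :=
        card_le_of_pairwiseDisjoint_ball (by positivity) (by positivity) hdisj
          fun v hv => (hinner v hv).trans (houter v hv)
    _ = ((1 + 2 * R) / (c * δ)) ^ finrank ℝ E := by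
        rw [mul_right_comm c, mul_div_mul_right _ _ hρ.ne']

theorem exists_one_le_mul_sum_rpow_of_subset_iUnion_ball
    (hf : ∀ i x y, dist (f i x) (f i y) = r i * dist x y) (hr : ∀ i, r i ∈ Set.Ioo 0 1)
    (hV : OpenSetCondition f V) (hAne : A.Nonempty) (hAb : Bornology.IsBounded A)
    (hA : ∀ i, MapsTo (f i) A A) (hs : 0 ≤ s) (hsum : 1 ≤ ∑ i, r i ^ s) :
    ∃ C : ℝ, ∀ (F : Finset ℕ) (x : ℕ → E) (ρ : ℕ → ℝ), (∀ m ∈ F, ρ m ∈ Set.Ioo 0 1) →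
      A ⊆ ⋃ m ∈ F, ball (x m) (ρ m) → 1 ≤ C * ∑ m ∈ F, ρ m ^ s := by
  classical
  have hr0 (i : ι) : 0 ≤ r i := (hr i).1.le
  obtain ⟨q, hq⟩ := exists_forall_card_isCut_le hf hr hV hAb
  obtain ⟨c, hc0, hc1, hrc⟩ := Finite.exists_nonneg_lt_one_forall_le fun i => (hr i).2
  refine ⟨q, fun F x ρ hρ hAF => ?_⟩
  obtain ⟨K, hK⟩ : ∃ K : ℕ, ∀ m ∈ F, c ^ K ≤ ρ m :=
    ((eventually_all_finset F).2 fun m hm =>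
      (tendsto_pow_atTop_nhds_zero_of_lt_one hc0 hc1).eventually (ge_mem_nhds (hρ m hm).1)).exists
  let S (m : ℕ) : Set (List ι) :=
    {v | v.length ≤ K ∧ IsCut r (ρ m) v ∧ (wordMap f v '' A ∩ ball (x m) (ρ m)).Nonempty}
  have hSfin (m : ℕ) : (S m).Finite := (List.finite_length_le ι K).subset fun v hv => hv.1
  let T (m : ℕ) : Finset (List ι) := (hSfin m).toFinset
  have hcover : ∀ w : List ι, w.length = K → ∃ v ∈ (F.sigma T).image Sigma.snd, v <+: w := by
    intro w hw
    obtain ⟨m, hm, v, hvw, hcut, hvA⟩ := exists_isCut_prefix_inter_nonempty hA hAne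
      (fun m hm => (hρ m hm).2) hAF fun m hm => (wordRatio_le_pow hr0 hrc w).trans (hw ▸ hK m hm)
    exact ⟨v, mem_image.2 ⟨⟨m, v⟩, mem_sigma.2 ⟨hm, (hSfin m).mem_toFinset.2
      ⟨hw ▸ hvw.length_le, hcut, hvA⟩⟩, rfl⟩, hvw⟩
  have hweight : ∀ m ∈ F, ∑ v ∈ T m, wordRatio r v ^ s ≤ q * ρ m ^ s := fun m hm =>
    calc ∑ v ∈ T m, wordRatio r v ^ s ≤ #(T m) • ρ m ^ s :=
          sum_le_card_nsmul _ _ _ fun v hv => Real.rpow_le_rpow (wordRatio_nonneg hr0 v)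
            ((hSfin m).mem_toFinset.1 hv).2.1.wordRatio_le hs
      _ ≤ q * ρ m ^ s := by
          rw [nsmul_eq_mul]
          exact mul_le_mul_of_nonneg_right
            (hq _ _ _ (hρ m hm).1 fun v hv => ((hSfin m).mem_toFinset.1 hv).2)
            (Real.rpow_nonneg (hρ m hm).1.le s)
  calc (1 : ℝ) ≤ ∑ v ∈ (F.sigma T).image Sigma.snd, wordRatio (fun i => r i ^ s) v :=
        one_le_sum_wordRatio_of_forall_prefix (fun i => Real.rpow_nonneg (hr0 i) s) hsum K _
          hcover
    _ ≤ ∑ p ∈ F.sigma T, wordRatio (fun i => r i ^ s) p.2 :=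
        sum_image_le_of_nonneg fun v _ => wordRatio_nonneg (fun i => Real.rpow_nonneg (hr0 i) s) v
    _ = ∑ m ∈ F, ∑ v ∈ T m, wordRatio r v ^ s := by
        rw [sum_sigma]
        simp only [wordRatio_rpow hr0]
    _ ≤ ∑ m ∈ F, q * ρ m ^ s := sum_le_sum hweight
    _ = q * ∑ m ∈ F, ρ m ^ s := (mul_sum _ _ _).symm

theorem ofReal_le_dimH (hf : ∀ i x y, dist (f i x) (f i y) = r i * dist x y)
    (hr : ∀ i, r i ∈ Set.Ioo 0 1) (hV : OpenSetCondition f V) (hAne : A.Nonempty)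
    (hAc : IsCompact A) (hA : ∀ i, MapsTo (f i) A A) (hsum : 1 ≤ ∑ i, r i ^ s) :
    ENNReal.ofReal s ≤ dimH A := by
  rcases le_or_gt s 0 with hs | hs
  · simp [ENNReal.ofReal_eq_zero.2 hs]
  borelize E
  obtain ⟨C, hC⟩ :=
    exists_one_le_mul_sum_rpow_of_subset_iUnion_ball hf hr hV hAne hAc.isBounded hA hs.le hsum
  refine le_dimH_of_hausdorffMeasure_ne_zero ?_
  rw [Real.coe_toNNReal _ hs.le]
  exact hausdorffMeasure_ne_zero_of_forall_finite_ball_cover hAne hAc hs hC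

end LowerBound

end IFS

theorem moran_hutchinson_general (n N : ℕ)
    (f : Fin N → EuclideanSpace ℝ (Fin n) → EuclideanSpace ℝ (Fin n))
    (r : Fin N → ℝ) (hr : ∀ i, r i ∈ Set.Ioo (0 : ℝ) 1)
    (hf : ∀ i x y, dist (f i x) (f i y) = r i * dist x y)
    (A : Set (EuclideanSpace ℝ (Fin n))) (hAne : A.Nonempty) (hAc : IsCompact A)
    (hA : A = ⋃ i, f i '' A)
    (V : Set (EuclideanSpace ℝ (Fin n))) (hVne : V.Nonempty)
    (hVb : Bornology.IsBounded V) (hVo : IsOpen V)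
    (hVmaps : ∀ i, f i '' V ⊆ V)
    (hVdisj : ∀ i j, i ≠ j → f i '' V ∩ f j '' V = ∅)
    (s : ℝ) (hs : 0 ≤ s) (hsum : ∑ i, r i ^ s = 1) :
    dimH A = ENNReal.ofReal s := by
  have hV : IFS.OpenSetCondition f V :=
    ⟨hVo, hVne, hVb, fun i => mapsTo_iff_image_subset.2 (hVmaps i),
      fun i j hij => disjoint_iff_inter_eq_empty.2 (hVdisj i j hij)⟩
  have hAinv (i : Fin N) : MapsTo (f i) A A :=
    mapsTo_iff_image_subset.2 ((subset_iUnion (fun j => f j '' A) i).trans hA.superset)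
  exact le_antisymm
    (IFS.dimH_le_ofReal (fun i x y => (hf i x y).le) (fun i => (hr i).1.le) (fun i => (hr i).2)
      hAc.isBounded hA.subset hs hsum.le)
    (IFS.ofReal_le_dimH hf hr hV hAne hAc hAinv hsum.ge)

/-- Moran–Hutchinson theorem: let `f 1, …, f N : ℝ^n → ℝ^n` (`N ≥ 1`) be similitudes with
ratios `r i ∈ (0,1)`, let `A` be a non-empty compact set with `A = ⋃ i, f i '' A`, and
suppose the open set condition holds for a non-empty bounded open set `V`. If `s ≥ 0`
satisfies `∑ i, r i ^ s = 1`, then `dimH A = s`. -/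
theorem moran_hutchinson (n N : ℕ) (hN : 1 ≤ N)
    (f : Fin N → EuclideanSpace ℝ (Fin n) → EuclideanSpace ℝ (Fin n))
    (r : Fin N → ℝ) (hr : ∀ i, r i ∈ Set.Ioo (0 : ℝ) 1)
    (hf : ∀ i x y, dist (f i x) (f i y) = r i * dist x y)
    (A : Set (EuclideanSpace ℝ (Fin n))) (hAne : A.Nonempty) (hAc : IsCompact A)
    (hA : A = ⋃ i, f i '' A)
    (V : Set (EuclideanSpace ℝ (Fin n))) (hVne : V.Nonempty)
    (hVb : Bornology.IsBounded V) (hVo : IsOpen V)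
    (hVmaps : ∀ i, f i '' V ⊆ V)
    (hVdisj : ∀ i j, i ≠ j → f i '' V ∩ f j '' V = ∅)
    (s : ℝ) (hs : 0 ≤ s) (hsum : ∑ i, r i ^ s = 1) :
    dimH A = ENNReal.ofReal s :=
  moran_hutchinson_general n N f r hr hf A hAne hAc hA V hVne hVb hVo hVmaps hVdisj s hs hsum
end
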